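/- Let H_A, H_C be Hilbert spaces, X ∈ B(H_A, H_C), let Q be the orthogonal projection of H_A ⊕ H_C onto the graph subspace G(X) = { x ⊕ X x : x ∈ H_A }, and let P be the orthogonal projection onto H_A ⊕ {0}. Define the operator angle Θ = arcsin √(I - P_A Q P_A*), where P_A : H_A ⊕ H_C → H_A is the canonical projection. Then tan Θ = √(X*X); in particular ‖tan Θ‖ = ‖X‖, and ‖sin Θ‖ = ‖Q - P‖. -/

import Mathlib

/-!
The graph projection is `Q = [[R, R X*], [X R, X R X*]]` with `R = (1 + X*X)⁻¹`, so
`P_A Q P_A* = R`. Since `arcsin √(1 - (1 + t)⁻¹) = arctan √t` for `t ≥ 0`, this gives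
`Θ = arctan √(X*X)`, hence `tan Θ = √(X*X)`, of norm `√‖X*X‖ = ‖X‖`, and `sin Θ = √(1 - R)`.
On the other side `(Q - P)² = diag(1 - R, X R X*)`, and writing `R = K²` with `K` commuting with
`X*X` gives `‖X R X*‖ = ‖K X*X K‖ = ‖R X*X‖ = ‖1 - R‖`; so `‖Q - P‖² = ‖1 - R‖ = ‖sin Θ‖²`.
-/

open Real ContinuousLinearMap
open scoped InnerProductSpace

lemma Real.sin_arctan_sqrt {t : ℝ} (ht : 0 ≤ t) : sin (arctan √t) = √(1 - (1 + t)⁻¹) := by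
  have : 0 < 1 + t := by linarith
  rw [sin_arctan, sq_sqrt ht, ← sqrt_div ht]
  congr 1
  field_simp
  ring

section CStar

variable {A : Type*} [CStarAlgebra A] {a : A}

lemma cfc_tan_arctan_sqrt (ha : IsSelfAdjoint a) :
    cfc tan (cfc (fun t => arctan √t) a) = cfc sqrt a := by
  rw [← cfc_comp' tan (fun t => arctan √t) a
    (continuousOn_tan_Ioo.mono (Set.image_subset_iff.2 fun t _ => arctan_mem_Ioo √t))]
  simp_rw [tan_arctan]

variable [PartialOrder A] [StarOrderedRing A]

lemma norm_cfc_sqrt (ha : 0 ≤ a) : ‖cfc sqrt a‖ = √‖a‖ := by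
  rw [← cfcₙ_eq_cfc, ← CFC.sqrt_eq_real_sqrt a ha, CFC.norm_sqrt a ha]

lemma continuousOn_inv_one_add_spectrum (ha : 0 ≤ a) :
    ContinuousOn (fun t : ℝ => (1 + t)⁻¹) (spectrum ℝ a) :=
  ContinuousOn.inv₀ (by fun_prop) fun t ht => by linarith [spectrum_nonneg_of_nonneg ha ht]

lemma cfc_inv_one_add_mul_one_add (ha : 0 ≤ a) :
    cfc (fun t : ℝ => (1 + t)⁻¹) a * (1 + a) = 1 := by
  have h1 : 1 + a = cfc (fun t : ℝ => 1 + t) a := by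
    rw [cfc_const_add 1 (fun t : ℝ => t) a, cfc_id' ℝ a, map_one]
  rw [h1, ← cfc_mul _ _ a (continuousOn_inv_one_add_spectrum ha), ← cfc_one ℝ a]
  refine cfc_congr fun t ht => inv_mul_cancel₀ ?_
  linarith [spectrum_nonneg_of_nonneg ha ht]

lemma one_sub_cfc_inv_one_add (ha : 0 ≤ a) :
    1 - cfc (fun t : ℝ => (1 + t)⁻¹) a = cfc (fun t : ℝ => 1 - (1 + t)⁻¹) a := by
  rw [cfc_sub _ _ a continuousOn_const (continuousOn_inv_one_add_spectrum ha), cfc_const_one ℝ a]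

lemma one_sub_cfc_inv_one_add_nonneg (ha : 0 ≤ a) : 0 ≤ 1 - cfc (fun t : ℝ => (1 + t)⁻¹) a := by
  rw [one_sub_cfc_inv_one_add ha]
  exact cfc_nonneg fun t ht =>
    sub_nonneg.2 (inv_le_one_of_one_le₀ (by linarith [spectrum_nonneg_of_nonneg ha ht]))

lemma cfc_sqrt_one_sub_cfc_inv_one_add (ha : 0 ≤ a) :
    cfc sqrt (1 - cfc (fun t : ℝ => (1 + t)⁻¹) a) = cfc (fun t => sin (arctan √t)) a := by
  rw [one_sub_cfc_inv_one_add ha, ← cfc_comp' sqrt (fun t : ℝ => 1 - (1 + t)⁻¹) a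
    (hf := continuousOn_const.sub (continuousOn_inv_one_add_spectrum ha))]
  exact cfc_congr fun t ht => (sin_arctan_sqrt (spectrum_nonneg_of_nonneg ha ht)).symm

lemma cfc_arcsin_sqrt_one_sub_cfc_inv_one_add (ha : 0 ≤ a) :
    cfc arcsin (cfc sqrt (1 - cfc (fun t : ℝ => (1 + t)⁻¹) a)) = cfc (fun t => arctan √t) a := by
  rw [cfc_sqrt_one_sub_cfc_inv_one_add ha, ← cfc_comp' arcsin (fun t => sin (arctan √t)) a]
  refine cfc_congr fun t _ => arcsin_sin ?_ ?_ <;>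
    linarith [(arctan_mem_Ioo √t).1, (arctan_mem_Ioo √t).2]

lemma cfc_sin_arctan_sqrt (ha : 0 ≤ a) :
    cfc sin (cfc (fun t => arctan √t) a) = cfc sqrt (1 - cfc (fun t : ℝ => (1 + t)⁻¹) a) := by
  rw [cfc_sqrt_one_sub_cfc_inv_one_add ha, ← cfc_comp' sin (fun t => arctan √t) a]

lemma cfc_sqrt_inv_one_add_mul_self (ha : 0 ≤ a) :
    cfc (fun t : ℝ => √(1 + t)⁻¹) a * cfc (fun t : ℝ => √(1 + t)⁻¹) a =
      cfc (fun t : ℝ => (1 + t)⁻¹) a := by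
  have hk : ContinuousOn (fun t : ℝ => √(1 + t)⁻¹) (spectrum ℝ a) :=
    continuous_sqrt.comp_continuousOn (continuousOn_inv_one_add_spectrum ha)
  rw [← cfc_mul _ _ a hk hk]
  exact cfc_congr fun t ht =>
    mul_self_sqrt (inv_nonneg.2 (by linarith [spectrum_nonneg_of_nonneg ha ht]))

lemma cfc_sqrt_inv_one_add_mul_mul (ha : 0 ≤ a) :
    cfc (fun t : ℝ => √(1 + t)⁻¹) a * a * cfc (fun t : ℝ => √(1 + t)⁻¹) a =
      1 - cfc (fun t : ℝ => (1 + t)⁻¹) a := by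
  have hcomm : Commute a (cfc (fun t : ℝ => √(1 + t)⁻¹) a) := by
    simpa only [cfc_id' ℝ a] using cfc_commute_cfc (fun t : ℝ => t) (fun t : ℝ => √(1 + t)⁻¹) a
  rw [mul_assoc, hcomm.eq, ← mul_assoc, cfc_sqrt_inv_one_add_mul_self ha, eq_sub_iff_add_eq,
    ← mul_add_one, add_comm, cfc_inv_one_add_mul_one_add ha]

end CStar

section Operators

variable {𝕜 E F : Type*} [RCLike 𝕜] [NormedAddCommGroup E] [InnerProductSpace 𝕜 E] [CompleteSpace E]
  [NormedAddCommGroup F] [InnerProductSpace 𝕜 F] [CompleteSpace F]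

lemma norm_comp_mul_self_comp_adjoint (X : E →L[𝕜] F) {k : E →L[𝕜] E} (hk : IsSelfAdjoint k) :
    ‖X ∘L (k * k) ∘L adjoint X‖ = ‖k * (adjoint X ∘L X) * k‖ := by
  have hXk : X ∘L (k * k) ∘L adjoint X = adjoint (adjoint (X ∘L k)) ∘L adjoint (X ∘L k) := by
    rw [adjoint_adjoint, adjoint_comp, hk.adjoint_eq]
    rfl
  have hkX : k * (adjoint X ∘L X) * k = adjoint (X ∘L k) ∘L (X ∘L k) := by
    rw [adjoint_comp, hk.adjoint_eq]
    rfl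
  rw [hXk, hkX, norm_adjoint_comp_self, norm_adjoint_comp_self, LinearIsometryEquiv.norm_map]

lemma inner_toLp_graph (X : E →L[𝕜] F) (w : WithLp 2 (E × F)) (v : E) :
    ⟪w, WithLp.toLp 2 (v, X v)⟫_𝕜 = ⟪w.fst + adjoint X w.snd, v⟫_𝕜 := by
  rw [inner_add_left, adjoint_inner_left]
  rfl

lemma IsStarProjection.apply_eq_of_range_eq_graph {X : E →L[𝕜] F}
    {Q : WithLp 2 (E × F) →L[𝕜] WithLp 2 (E × F)} (hQ : IsStarProjection Q)
    (hran : ∀ z, z ∈ Set.range Q ↔ ∃ x, z = WithLp.toLp 2 (x, X x))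
    {R : E →L[𝕜] E} (hR : R * (1 + adjoint X ∘L X) = 1) (z : WithLp 2 (E × F)) :
    Q z = WithLp.toLp 2 (R (z.fst + adjoint X z.snd), X (R (z.fst + adjoint X z.snd))) := by
  obtain ⟨a, ha⟩ := (hran (Q z)).1 ⟨z, rfl⟩
  have horth : ∀ v, ⟪z - Q z, WithLp.toLp 2 (v, X v)⟫_𝕜 = 0 := fun v => by
    obtain ⟨u, hu⟩ := (hran _).2 ⟨v, rfl⟩
    rw [← hu, ← adjoint_inner_left, hQ.isSelfAdjoint.adjoint_eq, map_sub,
      ← mul_apply_eq_comp Q Q, hQ.isIdempotentElem.eq, sub_self, inner_zero_left]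
  have hker : z.fst + adjoint X z.snd = (1 + adjoint X ∘L X) a := by
    have := inner_self_eq_zero.1 ((inner_toLp_graph X _ _).symm.trans (horth _))
    rw [ha, WithLp.sub_fst, WithLp.sub_snd, map_sub, sub_add_sub_comm, sub_eq_zero] at this
    exact this
  rw [ha, hker, ← mul_apply_eq_comp, hR, one_apply_eq_self]

lemma adjoint_apply_eq_toLp_zero {PA : WithLp 2 (E × F) →L[𝕜] E}
    (hPA : ∀ x y, PA (WithLp.toLp 2 (x, y)) = x) (x : E) : adjoint PA x = WithLp.toLp 2 (x, 0) := by
  refine ext_inner_left 𝕜 fun z => ?_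
  rw [adjoint_inner_right, show PA z = z.fst from hPA z.fst z.snd]
  simp

lemma eq_adjoint_comp_of_apply_toLp {P : WithLp 2 (E × F) →L[𝕜] WithLp 2 (E × F)}
    {PA : WithLp 2 (E × F) →L[𝕜] E} (hP : ∀ x y, P (WithLp.toLp 2 (x, y)) = WithLp.toLp 2 (x, 0))
    (hPA : ∀ x y, PA (WithLp.toLp 2 (x, y)) = x) : P = adjoint PA ∘L PA := by
  ext1 z
  rw [comp_apply, show PA z = z.fst from hPA z.fst z.snd, adjoint_apply_eq_toLp_zero hPA]
  exact hP z.fst z.snd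

end Operators

section BlockOperators

variable {𝕜 E F : Type*} [NontriviallyNormedField 𝕜] [NormedAddCommGroup E] [NormedSpace 𝕜 E]
  [NormedAddCommGroup F] [NormedSpace 𝕜 F]

lemma sub_mul_sub_apply_of_apply_eq_toLp {X : E →L[𝕜] F} {Y : F →L[𝕜] E} {R : E →L[𝕜] E}
    (hR : R * (1 + Y ∘L X) = 1) {Q P : WithLp 2 (E × F) →L[𝕜] WithLp 2 (E × F)}
    (hQ : ∀ z, Q z = WithLp.toLp 2 (R (z.fst + Y z.snd), X (R (z.fst + Y z.snd))))
    (hP : ∀ z, P z = WithLp.toLp 2 (z.fst, 0)) (z : WithLp 2 (E × F)) :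
    ((Q - P) * (Q - P)) z = WithLp.toLp 2 ((1 - R) z.fst, (X ∘L R ∘L Y) z.snd) := by
  have hRinv : ∀ w, R (w + Y (X w)) = w := fun w => by
    simpa using congr($hR w)
  have hD : ∀ x y, (Q - P) (WithLp.toLp 2 (x, y)) =
      WithLp.toLp 2 (R (x + Y y) - x, X (R (x + Y y))) := fun x y => by
    rw [sub_apply, hQ, hP, ← WithLp.toLp_sub, Prod.mk_sub_mk, sub_zero]
    rfl
  obtain ⟨x, y, rfl⟩ : ∃ x y, z = WithLp.toLp 2 (x, y) := ⟨z.fst, z.snd, rfl⟩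
  have hu : R (R (x + Y y) - x + Y (X (R (x + Y y)))) = R (Y y) := by
    rw [sub_add_eq_add_sub, map_sub, hRinv, map_add, add_sub_cancel_left]
  rw [mul_apply_eq_comp, hD, hD, hu, map_add]
  simp only [WithLp.toLp_fst, WithLp.toLp_snd, sub_apply, one_apply_eq_self, comp_apply]
  congr 2
  abel

lemma norm_eq_of_apply_eq_toLp {D : WithLp 2 (E × F) →L[𝕜] WithLp 2 (E × F)} {A : E →L[𝕜] E}
    {B : F →L[𝕜] F} (hD : ∀ z, D z = WithLp.toLp 2 (A z.fst, B z.snd)) (hB : ‖B‖ ≤ ‖A‖) :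
    ‖D‖ = ‖A‖ := by
  refine le_antisymm (opNorm_le_bound _ (norm_nonneg _) fun z => ?_)
    (opNorm_le_bound _ (norm_nonneg _) fun x => ?_)
  · rw [← sq_le_sq₀ (norm_nonneg _) (by positivity), WithLp.prod_norm_sq_eq_of_L2, hD, mul_pow,
      WithLp.prod_norm_sq_eq_of_L2, mul_add]
    simp only [WithLp.toLp_fst, WithLp.toLp_snd, ← mul_pow]
    gcongr
    · exact le_opNorm A _
    · exact (le_opNorm B _).trans (by gcongr)
  · calc ‖A x‖ = ‖(D (WithLp.toLp 2 (x, 0))).fst‖ := by simp only [hD, WithLp.toLp_fst]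
      _ ≤ ‖D (WithLp.toLp 2 (x, 0))‖ := WithLp.norm_fst_le _ _
      _ ≤ ‖D‖ * ‖x‖ := by simpa only [WithLp.norm_toLp_fst] using le_opNorm D (WithLp.toLp 2 (x, 0))

end BlockOperators

section Complex

variable {E F : Type*} [NormedAddCommGroup E] [InnerProductSpace ℂ E] [CompleteSpace E]
  [NormedAddCommGroup F] [InnerProductSpace ℂ F] [CompleteSpace F]

lemma norm_comp_cfc_inv_one_add_comp_adjoint (X : E →L[ℂ] F) :
    ‖X ∘L cfc (fun t : ℝ => (1 + t)⁻¹) (adjoint X ∘L X) ∘L adjoint X‖ =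
      ‖1 - cfc (fun t : ℝ => (1 + t)⁻¹) (adjoint X ∘L X)‖ := by
  have hT : 0 ≤ adjoint X ∘L X := (nonneg_iff_isPositive _).2 (isPositive_adjoint_comp_self X)
  rw [← cfc_sqrt_inv_one_add_mul_mul hT, ← norm_comp_mul_self_comp_adjoint X (cfc_predicate _ _),
    cfc_sqrt_inv_one_add_mul_self hT]

end Complex

theorem operator_angle_tan_sin
    {HA HC : Type*} [NormedAddCommGroup HA] [InnerProductSpace ℂ HA] [CompleteSpace HA]
    [NormedAddCommGroup HC] [InnerProductSpace ℂ HC] [CompleteSpace HC]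
    (X : HA →L[ℂ] HC)
    (G : Submodule ℂ (WithLp 2 (HA × HC)))
    (hG : ∀ z, z ∈ G ↔ ∃ x : HA, z = (WithLp.equiv 2 (HA × HC)).symm (x, X x))
    -- `Q` is the orthogonal projection onto the graph subspace `G(X)`
    (Q : WithLp 2 (HA × HC) →L[ℂ] WithLp 2 (HA × HC))
    (hQsa : IsSelfAdjoint Q) (hQproj : Q ∘L Q = Q) (hQran : Set.range Q = (G : Set _))
    -- `P` is the orthogonal projection onto `H_A ⊕ {0}`
    (P : WithLp 2 (HA × HC) →L[ℂ] WithLp 2 (HA × HC))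
    (hP : ∀ (x : HA) (y : HC),
      P ((WithLp.equiv 2 (HA × HC)).symm (x, y)) = (WithLp.equiv 2 (HA × HC)).symm (x, 0))
    -- `PA` is the canonical projection onto `H_A`
    (PA : WithLp 2 (HA × HC) →L[ℂ] HA)
    (hPA : ∀ (x : HA) (y : HC), PA ((WithLp.equiv 2 (HA × HC)).symm (x, y)) = x)
    -- the operator angle `Θ = arcsin √(I - P_A Q P_A*)`
    (Theta : HA →L[ℂ] HA)
    (hTheta : Theta = cfc Real.arcsin
      (cfc Real.sqrt (1 - PA ∘L Q ∘L ContinuousLinearMap.adjoint PA))) :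
    cfc Real.tan Theta = cfc Real.sqrt (ContinuousLinearMap.adjoint X ∘L X) ∧
      ‖cfc Real.tan Theta‖ = ‖X‖ ∧
      ‖cfc Real.sin Theta‖ = ‖Q - P‖ := by
  set T := adjoint X ∘L X
  have hT : 0 ≤ T := (nonneg_iff_isPositive _).2 (isPositive_adjoint_comp_self X)
  set R := cfc (fun t : ℝ => (1 + t)⁻¹) T
  have hR : R * (1 + T) = 1 := cfc_inv_one_add_mul_one_add hT
  have hQ : ∀ z, Q z =
      WithLp.toLp 2 (R (z.fst + adjoint X z.snd), X (R (z.fst + adjoint X z.snd))) :=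
    IsStarProjection.apply_eq_of_range_eq_graph ⟨hQproj, hQsa⟩ (by simpa [hQran] using hG) hR
  have hPAQPA : PA ∘L Q ∘L adjoint PA = R := by
    ext1 x
    rw [comp_apply, comp_apply, adjoint_apply_eq_toLp_zero hPA, hQ]
    simp only [WithLp.toLp_fst, WithLp.toLp_snd, map_zero, add_zero]
    exact hPA _ _
  have hΘ : Theta = cfc (fun t => arctan √t) T := by
    rw [hTheta, hPAQPA, cfc_arcsin_sqrt_one_sub_cfc_inv_one_add hT]
  have hPsa : IsSelfAdjoint P :=
    eq_adjoint_comp_of_apply_toLp hP hPA ▸ (isPositive_adjoint_comp_self PA).isSelfAdjoint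
  have hQP : ‖Q - P‖ ^ 2 = ‖1 - R‖ := by
    rw [← (hQsa.sub hPsa).norm_mul_self]
    exact norm_eq_of_apply_eq_toLp
      (sub_mul_sub_apply_of_apply_eq_toLp hR hQ fun z => hP z.fst z.snd)
      (norm_comp_cfc_inv_one_add_comp_adjoint X).le
  refine ⟨?_, ?_, ?_⟩
  · rw [hΘ, cfc_tan_arctan_sqrt hT.isSelfAdjoint]
  · rw [hΘ, cfc_tan_arctan_sqrt hT.isSelfAdjoint, norm_cfc_sqrt hT, norm_adjoint_comp_self,
      sqrt_mul_self (norm_nonneg _)]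
  · rw [hΘ, cfc_sin_arctan_sqrt hT, norm_cfc_sqrt (one_sub_cfc_inv_one_add_nonneg hT), ← hQP,
      sqrt_sq (norm_nonneg _)]
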